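/- Let $2 - 2/\alpha_1 - 1/\alpha_3 \leq 0$ with $3/2 \leq \alpha_1 \leq 2$ and $0 < \alpha_3 \leq \alpha_1$. Then $\int_2^{\infty}\int_1^{z}\int_1^{z} \left(x^{\alpha_1} + y^{\alpha_1}\ln^{\alpha_1} z + z^{\alpha_3}\right)^{-2}\, dx\, dy\, dz = \infty$. -/

import Mathlib

/-!
For large `z` put `L = log z` and `A = z ^ (α₃ / α₁)`, so that `A ^ α₁ = z ^ α₃`. On the box
`1 ≤ x ≤ A`, `1 ≤ y ≤ A / L` each of the three terms of the denominator is at most `z ^ α₃`, so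
the inner double integral is at least of order `A ^ 2 / (L z ^ (2 α₃))`. The hypothesis
`2 / α₁ + 1 / α₃ ≥ 2` says exactly `z ^ (2 α₃) ≤ A ^ 2 z`, hence the integrand in `z` dominates a
multiple of `1 / (z log z)`, whose integral over `[a, ∞)` diverges like `log (log z)`.
-/

open Set MeasureTheory Real Filter

theorem not_integrableOn_Ici_inv_div_log {a : ℝ} :
    ¬ IntegrableOn (fun x ↦ x⁻¹ / log x) (Ici a) := by
  have hd : ∀ᶠ x in atTop, DifferentiableAt ℝ (fun x ↦ log (log x)) x := by
    filter_upwards [eventually_gt_atTop 1] with x hx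
    exact differentiableAt_log_log (by linarith) hx.ne' (by linarith)
  exact not_integrableOn_of_tendsto_norm_atTop_of_deriv_isBigO_filter atTop (Ici_mem_atTop a) hd
    (tendsto_norm_atTop_atTop.comp (tendsto_log_atTop.comp tendsto_log_atTop))
    (by rw [deriv_log_log]; exact Asymptotics.isBigO_refl _ _)

theorem lintegral_Ici_inv_div_log_eq_top {a : ℝ} (ha : 1 ≤ a) :
    ∫⁻ x in Ici a, ENNReal.ofReal (x⁻¹ / log x) = ⊤ := by
  by_contra h
  refine not_integrableOn_Ici_inv_div_log ((lintegral_ofReal_ne_top_iff_integrable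
    (measurable_inv.div measurable_log).aestronglyMeasurable ?_).1 h)
  filter_upwards [ae_restrict_mem measurableSet_Ici] with x hx
  exact div_nonneg (inv_nonneg.2 (by linarith [mem_Ici.1 hx])) (log_nonneg (ha.trans hx))

theorem const_mul_volume_le_setLIntegral {α : Type*} [MeasurableSpace α] {μ : Measure α}
    {f : α → ENNReal} {s t : Set α} {c : ENNReal} (ht : MeasurableSet t) (hts : t ⊆ s)
    (hf : ∀ x ∈ t, c ≤ f x) : c * μ t ≤ ∫⁻ x in s, f x ∂μ :=
  calc c * μ t = ∫⁻ _ in t, c ∂μ := (setLIntegral_const t c).symm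
    _ ≤ ∫⁻ x in t, f x ∂μ := setLIntegral_mono' ht hf
    _ ≤ ∫⁻ x in s, f x ∂μ := lintegral_mono_set hts

theorem setLIntegral_Ici_eq_top_of_eventually_ge {f : ℝ → ENNReal} {c : ℝ} (hc : 0 < c) (a : ℝ)
    (hf : ∀ᶠ x in atTop, ENNReal.ofReal (c * (x⁻¹ / log x)) ≤ f x) :
    ∫⁻ x in Ici a, f x = ⊤ := by
  obtain ⟨b, hb⟩ := eventually_atTop.1 hf
  set b' := max b (max a 1)
  refine eq_top_iff.2 ?_
  calc (⊤ : ENNReal) = ENNReal.ofReal c * ∫⁻ x in Ici b', ENNReal.ofReal (x⁻¹ / log x) := by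
        rw [lintegral_Ici_inv_div_log_eq_top (by simp [b']), ENNReal.mul_top (by simpa)]
    _ = ∫⁻ x in Ici b', ENNReal.ofReal (c * (x⁻¹ / log x)) := by
        rw [← lintegral_const_mul' _ _ ENNReal.ofReal_ne_top]
        simp only [ENNReal.ofReal_mul hc.le]
    _ ≤ ∫⁻ x in Ici b', f x :=
        setLIntegral_mono' measurableSet_Ici fun x hx ↦ hb x (le_of_max_le_left hx)
    _ ≤ ∫⁻ x in Ici a, f x := lintegral_mono_set (Ici_subset_Ici.2 (by simp [b']))

theorem rpow_add_mul_rpow_add_rpow_le_three_mul {α L A x y : ℝ} (hα : 0 ≤ α) (hL : 0 ≤ L)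
    (hx : 0 ≤ x) (hxA : x ≤ A) (hy : 0 ≤ y) (hyA : y * L ≤ A) :
    x ^ α + y ^ α * L ^ α + A ^ α ≤ 3 * A ^ α := by
  rw [← mul_rpow hy hL]
  have h1 : x ^ α ≤ A ^ α := by gcongr
  have h2 : (y * L) ^ α ≤ A ^ α := by gcongr
  linarith

theorem ofReal_le_lintegral_Icc_Icc_inv_sq {α L A z : ℝ} (hα : 0 ≤ α) (hL : 0 < L)
    (hA : 1 ≤ A) (hAz : A ≤ z) (hALz : A / L ≤ z) :
    ENNReal.ofReal (1 / (3 * A ^ α) ^ 2 * (A - 1) * (A / L - 1)) ≤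
      ∫⁻ y in Icc 1 z, ∫⁻ x in Icc 1 z,
        ENNReal.ofReal (1 / (x ^ α + y ^ α * L ^ α + A ^ α) ^ 2) := by
  have hbound : ∀ y ∈ Icc 1 (A / L), ∀ x ∈ Icc 1 A, ENNReal.ofReal (1 / (3 * A ^ α) ^ 2) ≤
      ENNReal.ofReal (1 / (x ^ α + y ^ α * L ^ α + A ^ α) ^ 2) := by
    rintro y ⟨hy1, hyA⟩ x ⟨hx1, hxA⟩
    have hD : 0 < x ^ α + y ^ α * L ^ α + A ^ α := by positivity
    refine ENNReal.ofReal_le_ofReal (one_div_le_one_div_of_le (pow_pos hD 2) ?_)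
    gcongr
    exact rpow_add_mul_rpow_add_rpow_le_three_mul hα hL.le (by linarith) hxA (by linarith)
      ((le_div_iff₀ hL).1 hyA)
  have hm : 0 ≤ 1 / (3 * A ^ α) ^ 2 := by positivity
  rw [ENNReal.ofReal_mul (mul_nonneg hm (by linarith)), ENNReal.ofReal_mul hm,
    ← Real.volume_Icc, ← Real.volume_Icc]
  refine const_mul_volume_le_setLIntegral measurableSet_Icc (Icc_subset_Icc_right hALz)
    fun y hy ↦ ?_
  exact const_mul_volume_le_setLIntegral measurableSet_Icc (Icc_subset_Icc_right hAz)
    (hbound y hy)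

theorem inv_div_le_mul_sub_one_mul_div_sub_one {A L S z : ℝ} (hL : 0 < L) (hz : 0 < z)
    (hA : 2 ≤ A) (hAL : 2 * L ≤ A) (hS : 0 < S) (hSA : S ^ 2 ≤ A ^ 2 * z) :
    1 / 36 * (z⁻¹ / L) ≤ 1 / (3 * S) ^ 2 * (A - 1) * (A / L - 1) := by
  have h1 : A / 2 ≤ A - 1 := by linarith
  have h2 : A / (2 * L) ≤ A / L - 1 := by
    rw [div_sub_one hL.ne', div_le_div_iff₀ (by positivity) hL]; nlinarith
  calc 1 / 36 * (z⁻¹ / L) = 1 / (9 * (A ^ 2 * z)) * (A / 2) * (A / (2 * L)) := by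
        field_simp; ring
    _ ≤ 1 / (3 * S) ^ 2 * (A - 1) * (A / L - 1) := by
        have : 1 / (9 * (A ^ 2 * z)) ≤ 1 / (3 * S) ^ 2 := by
          gcongr; nlinarith
        gcongr
        exact mul_nonneg (by positivity) (by linarith)

theorem eventually_two_mul_log_le_rpow {β : ℝ} (hβ : 0 < β) :
    ∀ᶠ z in atTop, 2 * log z ≤ z ^ β := by
  filter_upwards [((isLittleO_log_rpow_atTop hβ).const_mul_left 2).eventuallyLE,
    eventually_ge_atTop 0] with z hz hz0
  rw [Real.norm_of_nonneg (rpow_nonneg hz0 β), norm_mul, Real.norm_two] at hz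
  linarith [le_norm_self (log z)]

theorem stmt14_general (α₁ α₃ : ℝ) (h1 : 3 / 2 ≤ α₁) (h3 : 0 < α₃) (h31 : α₃ ≤ α₁)
    (hγ : 2 - 2 / α₁ - 1 / α₃ ≤ 0) :
    (∫⁻ z in Ici (2 : ℝ), ∫⁻ y in Icc (1 : ℝ) z, ∫⁻ x in Icc (1 : ℝ) z,
        ENNReal.ofReal (1 / (x ^ α₁ + y ^ α₁ * Real.log z ^ α₁ + z ^ α₃) ^ 2)) = ⊤ := by
  have hα₁ : 0 < α₁ := by linarith
  set β := α₃ / α₁ with hβ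
  have hβ0 : 0 < β := div_pos h3 hα₁
  have hβ1 : β ≤ 1 := div_le_one_of_le₀ h31 hα₁.le
  have hexp : 2 * α₃ ≤ 2 * β + 1 := by
    calc 2 * α₃ ≤ (2 / α₁ + 1 / α₃) * α₃ := by gcongr; linarith
      _ = 2 * β + 1 := by rw [hβ]; field_simp
  refine setLIntegral_Ici_eq_top_of_eventually_ge (c := 1 / 36) (by norm_num) 2 ?_
  filter_upwards [eventually_ge_atTop (exp 1), eventually_two_mul_log_le_rpow hβ0]
    with z hze hlog
  have hz1 : 1 ≤ z := (one_le_exp zero_le_one).trans hze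
  have hL : 1 ≤ log z := (le_log_iff_exp_le (by linarith)).2 hze
  set A := z ^ β with hA
  have hAz : A ≤ z := by simpa using rpow_le_rpow_of_exponent_le hz1 hβ1
  have hS : z ^ α₃ = A ^ α₁ := by
    rw [hA, ← rpow_mul (by linarith), hβ, div_mul_cancel₀ _ hα₁.ne']
  have hSA : (z ^ α₃) ^ 2 ≤ A ^ 2 * z := by
    rw [← rpow_natCast, ← rpow_natCast, ← rpow_mul (by linarith), hA, ← rpow_mul (by linarith),
      ← rpow_add_one (by linarith)]
    push_cast
    exact rpow_le_rpow_of_exponent_le hz1 (by linarith)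
  rw [hS] at hSA ⊢
  calc ENNReal.ofReal (1 / 36 * (z⁻¹ / log z))
      ≤ ENNReal.ofReal (1 / (3 * A ^ α₁) ^ 2 * (A - 1) * (A / log z - 1)) :=
        ENNReal.ofReal_le_ofReal (inv_div_le_mul_sub_one_mul_div_sub_one (by linarith)
          (by linarith) (by linarith) hlog (by positivity) hSA)
    _ ≤ _ := ofReal_le_lintegral_Icc_Icc_inv_sq hα₁.le (by linarith) (by linarith)
          hAz ((div_le_self (by positivity) hL).trans hAz)

theorem stmt14 (α₁ α₃ : ℝ) (h1 : 3 / 2 ≤ α₁) (h12 : α₁ ≤ 2) (h3 : 0 < α₃) (h31 : α₃ ≤ α₁)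
    (hγ : 2 - 2 / α₁ - 1 / α₃ ≤ 0) :
    (∫⁻ z in Ici (2 : ℝ), ∫⁻ y in Icc (1 : ℝ) z, ∫⁻ x in Icc (1 : ℝ) z,
        ENNReal.ofReal (1 / (x ^ α₁ + y ^ α₁ * Real.log z ^ α₁ + z ^ α₃) ^ 2)) = ⊤ :=
  stmt14_general α₁ α₃ h1 h3 h31 hγ
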